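/- arXiv:2204.12665 — 3 statements merged into one kernel-verified Lean document; each statement's English description precedes it below -/
import Mathlib

section
/- Let S and A be nonempty finite sets, P : S → A → PMF S a transition function, r : S → A → S → ℝ a reward function, and γ a real number with 0 ≤ γ < 1. Then the Bellman optimality operator T, defined on functions Q : S × A → ℝ by (T Q)(s,a) = Σ_{s'} P(s'|s,a) · (r(s,a,s') + γ · max_{a'} Q(s',a')), is Lipschitz with constant γ with respect to the supremum metric on S × A → ℝ; in particular, for γ < 1 it is a contraction. -/
open Finset

/-- The Bellman optimality operator for a finite discounted MDP:
`(T Q)(s,a) = Σ_{s'} P(s'|s,a) · (r(s,a,s') + γ · max_{a'} Q(s',a'))`. -/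
noncomputable def bellmanOpt {S A : Type} [Fintype S] [Fintype A] [Nonempty A]
    (P : S → A → PMF S) (r : S → A → S → ℝ) (γ : ℝ) (Q : S × A → ℝ) : S × A → ℝ :=
  fun sa => ∑ s' : S, (P sa.1 sa.2 s').toReal *
    (r sa.1 sa.2 s' + γ * univ.sup' univ_nonempty (fun a' : A => Q (s', a')))

/-- The policy evaluation operator for a deterministic stationary policy `π`:
`(T_π Q)(s,a) = Σ_{s'} P(s'|s,a) · (r(s,a,s') + γ · Q(s', π(s')))`. -/
noncomputable def policyEval {S A : Type} [Fintype S]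
    (P : S → A → PMF S) (r : S → A → S → ℝ) (γ : ℝ) (pol : S → A)
    (Q : S × A → ℝ) : S × A → ℝ :=
  fun sa => ∑ s' : S, (P sa.1 sa.2 s').toReal *
    (r sa.1 sa.2 s' + γ * Q (s', pol s'))

lemma sup'_sub_sup'_le_aux {A : Type} [Fintype A] [Nonempty A]
    (f g : A → ℝ) (c : ℝ) (h : ∀ a, |f a - g a| ≤ c) :
    |univ.sup' univ_nonempty f - univ.sup' univ_nonempty g| ≤ c := by
  rw [abs_sub_le_iff]
  constructor
  · rw [sub_le_iff_le_add]
    apply Finset.sup'_le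
    intro a _
    have := (abs_sub_le_iff.mp (h a)).1
    have hg : g a ≤ univ.sup' univ_nonempty g := Finset.le_sup' g (mem_univ a)
    linarith
  · rw [sub_le_iff_le_add]
    apply Finset.sup'_le
    intro a _
    have := (abs_sub_le_iff.mp (h a)).2
    have hf : f a ≤ univ.sup' univ_nonempty f := Finset.le_sup' f (mem_univ a)
    linarith

lemma pmf_sum_toReal_eq_one {S : Type} [Fintype S] (p : PMF S) :
    ∑ s : S, (p s).toReal = 1 := by
  have h : ∑ s : S, p s = 1 := by
    rw [← tsum_fintype (L := SummationFilter.unconditional _)]; exact p.tsum_coe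
  have := congrArg ENNReal.toReal h
  rwa [ENNReal.toReal_sum (fun s _ => p.apply_ne_top s)] at this

/-- The Bellman optimality operator is Lipschitz with constant `γ` with respect to the
supremum metric on `S × A → ℝ`; for `γ < 1` it is a contraction. -/
theorem bellman_lipschitz {S A : Type} [Fintype S] [Fintype A] [Nonempty S] [Nonempty A]
    (P : S → A → PMF S) (r : S → A → S → ℝ) (γ : ℝ) (hγ0 : 0 ≤ γ) (hγ1 : γ < 1)
    (Q₁ Q₂ : S × A → ℝ) :
    dist (bellmanOpt P r γ Q₁) (bellmanOpt P r γ Q₂) ≤ γ * dist Q₁ Q₂ := by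
  rw [dist_pi_le_iff (mul_nonneg hγ0 dist_nonneg)]
  intro sa
  rw [Real.dist_eq, bellmanOpt, bellmanOpt, ← Finset.sum_sub_distrib]
  have key : ∀ s' : S, (P sa.1 sa.2 s').toReal *
      (r sa.1 sa.2 s' + γ * univ.sup' univ_nonempty (fun a' : A => Q₁ (s', a'))) -
      (P sa.1 sa.2 s').toReal *
      (r sa.1 sa.2 s' + γ * univ.sup' univ_nonempty (fun a' : A => Q₂ (s', a'))) =
      (P sa.1 sa.2 s').toReal * γ *
      (univ.sup' univ_nonempty (fun a' : A => Q₁ (s', a')) -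
       univ.sup' univ_nonempty (fun a' : A => Q₂ (s', a'))) := by
    intro s'; ring
  simp only [key]
  calc |∑ s' : S, (P sa.1 sa.2 s').toReal * γ *
        (univ.sup' univ_nonempty (fun a' : A => Q₁ (s', a')) -
         univ.sup' univ_nonempty (fun a' : A => Q₂ (s', a')))|
      ≤ ∑ s' : S, |(P sa.1 sa.2 s').toReal * γ *
        (univ.sup' univ_nonempty (fun a' : A => Q₁ (s', a')) -
         univ.sup' univ_nonempty (fun a' : A => Q₂ (s', a')))| :=
        Finset.abs_sum_le_sum_abs _ _
    _ ≤ ∑ s' : S, (P sa.1 sa.2 s').toReal * γ * dist Q₁ Q₂ := by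
        apply Finset.sum_le_sum
        intro s' _
        rw [abs_mul, abs_of_nonneg (mul_nonneg ENNReal.toReal_nonneg hγ0)]
        apply mul_le_mul_of_nonneg_left _ (mul_nonneg ENNReal.toReal_nonneg hγ0)
        apply sup'_sub_sup'_le_aux
        intro a'
        have := dist_le_pi_dist Q₁ Q₂ (s', a')
        rwa [Real.dist_eq] at this
    _ = γ * dist Q₁ Q₂ := by
        rw [← Finset.sum_mul, ← Finset.sum_mul, pmf_sum_toReal_eq_one, one_mul]
end

section
/- Let S and A be nonempty finite sets, P : S → A → PMF S, r : S → A → S → ℝ, and 0 ≤ γ < 1, and let q* be the unique fixed point of the Bellman optimality operator T. If π* : S → A is a greedy policy with respect to q*, i.e., q*(s, π*(s)) = max_{a ∈ A} q*(s,a) for every s ∈ S, then q* is the unique fixed point of the policy evaluation operator T_{π*}; that is, the action-value function of the greedy policy equals the optimal Q-function: q_{π*} = q*. -/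
open Finset

/-- If a policy is greedy with respect to the optimal Q-function `qstar`, then `qstar` is the
unique fixed point of the corresponding policy evaluation operator; i.e. the action-value
function of the greedy policy equals the optimal Q-function. -/
theorem greedy_policy_optimal {S A : Type} [Fintype S] [Fintype A] [Nonempty S] [Nonempty A]
    (P : S → A → PMF S) (r : S → A → S → ℝ) (γ : ℝ) (hγ0 : 0 ≤ γ) (hγ1 : γ < 1)
    (qstar : S × A → ℝ) (hfix : bellmanOpt P r γ qstar = qstar)
    (polstar : S → A)
    (hgreedy : ∀ s : S,
      qstar (s, polstar s) = univ.sup' univ_nonempty (fun a : A => qstar (s, a))) :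
    policyEval P r γ polstar qstar = qstar ∧
    (∀ q : S × A → ℝ, policyEval P r γ polstar q = q → q = qstar) := by
  have hsum : ∀ s a, ∑ s' : S, ((P s a) s').toReal = 1 := by
    intro s a
    have h1 : ∑ s' : S, (P s a) s' = 1 := by
      have := (P s a).tsum_coe
      rwa [tsum_fintype] at this
    have hne : ∀ s' ∈ (univ : Finset S), (P s a) s' ≠ ⊤ := by
      intro s' _
      exact (P s a).apply_ne_top s'
    rw [← ENNReal.toReal_sum hne, h1, ENNReal.toReal_one]
  have hpe : policyEval P r γ polstar qstar = qstar := by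
    funext sa
    have : policyEval P r γ polstar qstar sa = bellmanOpt P r γ qstar sa := by
      unfold policyEval bellmanOpt
      refine Finset.sum_congr rfl fun s' _ => ?_
      rw [hgreedy s']
    rw [this, hfix]
  refine ⟨hpe, fun q hq => ?_⟩
  set d : S × A → ℝ := fun sa => |q sa - qstar sa| with hd
  obtain ⟨M, hM⟩ : ∃ M : ℝ, (∀ sa, d sa ≤ M) ∧ ∃ sa0, d sa0 = M := by
    refine ⟨univ.sup' univ_nonempty d, fun sa => le_sup' d (mem_univ sa), ?_⟩
    obtain ⟨sa0, _, h0⟩ := exists_mem_eq_sup' (univ_nonempty) d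
    exact ⟨sa0, h0.symm⟩
  obtain ⟨hub, sa0, hsa0⟩ := hM
  have hkey : ∀ sa, d sa ≤ γ * M := by
    intro sa
    have hq' : q sa = policyEval P r γ polstar q sa := by rw [hq]
    have hq2 : qstar sa = policyEval P r γ polstar qstar sa := by rw [hpe]
    have hdiff : q sa - qstar sa =
        ∑ s' : S, ((P sa.1 sa.2) s').toReal * (γ * (q (s', polstar s') - qstar (s', polstar s'))) := by
      rw [hq', hq2]
      unfold policyEval
      rw [← Finset.sum_sub_distrib]
      refine Finset.sum_congr rfl fun s' _ => ?_
      ring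
    rw [hd]
    simp only
    rw [hdiff]
    calc |∑ s' : S, ((P sa.1 sa.2) s').toReal * (γ * (q (s', polstar s') - qstar (s', polstar s')))|
        ≤ ∑ s' : S, |((P sa.1 sa.2) s').toReal * (γ * (q (s', polstar s') - qstar (s', polstar s')))| :=
          Finset.abs_sum_le_sum_abs _ _
      _ ≤ ∑ s' : S, ((P sa.1 sa.2) s').toReal * (γ * M) := by
          refine Finset.sum_le_sum fun s' _ => ?_
          rw [abs_mul, abs_mul, abs_of_nonneg ENNReal.toReal_nonneg, abs_of_nonneg hγ0]
          exact mul_le_mul_of_nonneg_left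
            (mul_le_mul_of_nonneg_left (hub (s', polstar s')) hγ0) ENNReal.toReal_nonneg
      _ = γ * M := by rw [← Finset.sum_mul, hsum, one_mul]
  have hM0 : 0 ≤ M := (abs_nonneg _).trans (hsa0.le)
  have hMle : M ≤ γ * M := hsa0 ▸ hkey sa0
  have hMz : M ≤ 0 := by nlinarith
  have hM : M = 0 := le_antisymm hMz hM0
  funext sa
  have := hub sa
  rw [hM] at this
  have : |q sa - qstar sa| = 0 := le_antisymm this (abs_nonneg _)
  linarith [abs_eq_zero.mp this]
end

section
/- Let S and A be nonempty finite sets, P : S → A → PMF S, r : S → A → S → ℝ, and 0 ≤ γ < 1, and let q* be the unique fixed point of the Bellman optimality operator T. Then for every deterministic stationary policy π : S → A, the action-value function q_π (the unique fixed point of T_π) satisfies q_π(s,a) ≤ q*(s,a) for all s ∈ S and a ∈ A; i.e., the optimal Q-function dominates the action-value function of every deterministic stationary policy. -/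
open Finset

/-- The optimal Q-function dominates the action-value function of every deterministic
stationary policy. -/
theorem qstar_dominates {S A : Type} [Fintype S] [Fintype A] [Nonempty S] [Nonempty A]
    (P : S → A → PMF S) (r : S → A → S → ℝ) (γ : ℝ) (hγ0 : 0 ≤ γ) (hγ1 : γ < 1)
    (qstar : S × A → ℝ) (hfix : bellmanOpt P r γ qstar = qstar)
    (pol : S → A) (qpi : S × A → ℝ) (hfixpi : policyEval P r γ pol qpi = qpi) :
    ∀ (s : S) (a : A), qpi (s, a) ≤ qstar (s, a) := by
  have hsum : ∀ s a, ∑ s' : S, ((P s a) s').toReal = 1 := by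
    intro s a
    have h1 : (∑' s' : S, (P s a) s') = 1 := (P s a).tsum_coe
    rw [tsum_fintype] at h1
    rw [← ENNReal.toReal_sum (fun x _ => (P s a).apply_ne_top x), h1, ENNReal.toReal_one]
  set M : ℝ := univ.sup' univ_nonempty (fun sa : S × A => qpi sa - qstar sa) with hM
  obtain ⟨sa₀, -, hsa₀⟩ := Finset.exists_mem_eq_sup' (univ_nonempty :
    (univ : Finset (S × A)).Nonempty) (fun sa : S × A => qpi sa - qstar sa)
  have key : M ≤ γ * M := by
    have hM0 : M = qpi sa₀ - qstar sa₀ := hM.trans hsa₀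
    conv_lhs => rw [hM0]
    rw [← hfixpi, ← hfix]
    unfold policyEval bellmanOpt
    rw [← Finset.sum_sub_distrib]
    have step : ∀ s' : S,
        (P sa₀.1 sa₀.2 s').toReal * (r sa₀.1 sa₀.2 s' + γ * qpi (s', pol s')) -
        (P sa₀.1 sa₀.2 s').toReal * (r sa₀.1 sa₀.2 s' +
          γ * univ.sup' univ_nonempty (fun a' : A => qstar (s', a')))
        ≤ (P sa₀.1 sa₀.2 s').toReal * (γ * M) := by
      intro s'
      rw [← mul_sub]
      apply mul_le_mul_of_nonneg_left _ ENNReal.toReal_nonneg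
      have h1 : qstar (s', pol s') ≤ univ.sup' univ_nonempty (fun a' : A => qstar (s', a')) :=
        Finset.le_sup' (fun a' : A => qstar (s', a')) (Finset.mem_univ (pol s'))
      have h2 : qpi (s', pol s') - qstar (s', pol s') ≤ M :=
        Finset.le_sup' (fun sa : S × A => qpi sa - qstar sa) (Finset.mem_univ (s', pol s'))
      have : qpi (s', pol s') - univ.sup' univ_nonempty (fun a' : A => qstar (s', a')) ≤ M := by
        linarith
      calc r sa₀.1 sa₀.2 s' + γ * qpi (s', pol s') -
            (r sa₀.1 sa₀.2 s' + γ * univ.sup' univ_nonempty (fun a' : A => qstar (s', a')))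
          = γ * (qpi (s', pol s') -
              univ.sup' univ_nonempty (fun a' : A => qstar (s', a'))) := by ring
        _ ≤ γ * M := mul_le_mul_of_nonneg_left this hγ0
    calc ∑ s' : S, ((P sa₀.1 sa₀.2 s').toReal * (r sa₀.1 sa₀.2 s' + γ * qpi (s', pol s')) -
          (P sa₀.1 sa₀.2 s').toReal * (r sa₀.1 sa₀.2 s' +
            γ * univ.sup' univ_nonempty (fun a' : A => qstar (s', a'))))
        ≤ ∑ s' : S, (P sa₀.1 sa₀.2 s').toReal * (γ * M) :=
          Finset.sum_le_sum (fun s' _ => step s')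
      _ = γ * M := by rw [← Finset.sum_mul, hsum]; ring
  have hMle : M ≤ 0 := by nlinarith
  intro s a
  have := Finset.le_sup' (fun sa : S × A => qpi sa - qstar sa) (Finset.mem_univ (s, a))
  simp only [← hM] at this
  linarith
end
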